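/- arXiv:2202.10717 — 2 statements merged into one kernel-verified Lean document; each statement's English description precedes it below -/
import Mathlib

section
/- Strong convexity of the hockey-stick divergence: let γ₁, γ₂ ≥ 1, let x range over a finite index set, let p and q be probability distributions on this set, and let ρ_x, σ_x be density operators on a fixed finite-dimensional complex Hilbert space. Setting ρ = Σ_x p(x)·ρ_x and σ = Σ_x q(x)·σ_x, one has E_{γ₁γ₂}(ρ‖σ) ≤ Σ_x p(x)·E_{γ₁}(ρ_x‖σ_x) + γ₁·E_{γ₂}(p‖q), where E_γ(p‖q) := Σ_x max(p(x) − γ·q(x), 0) is the classical hockey-stick divergence. -/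
open scoped BigOperators ComplexOrder

/-- Trace of the positive part of a Hermitian matrix (0 if not Hermitian). -/
noncomputable def posPartTrace {n : Type*} [Fintype n] [DecidableEq n]
    (X : Matrix n n ℂ) : ℝ :=
  if h : X.IsHermitian then ∑ i, max (h.eigenvalues i) 0 else 0

/-- The quantum hockey-stick divergence `E_γ(ρ‖σ) = Tr[(ρ - γσ)₊]`. -/
noncomputable def hsDiv {n : Type*} [Fintype n] [DecidableEq n]
    (γ : ℝ) (ρ σ : Matrix n n ℂ) : ℝ :=
  posPartTrace (ρ - (γ : ℂ) • σ)

/-- A density operator: positive semidefinite with unit trace. -/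
def IsDensity {n : Type*} [Fintype n] [DecidableEq n] (ρ : Matrix n n ℂ) : Prop :=
  ρ.PosSemidef ∧ ρ.trace = 1

/-- Trace norm: the sum of the singular values. -/
noncomputable def traceNorm {n : Type*} [Fintype n] [DecidableEq n]
    (X : Matrix n n ℂ) : ℝ :=
  ∑ i, Real.sqrt ((Matrix.posSemidef_conjTranspose_mul_self X).isHermitian.eigenvalues i)

/-- Completely positive trace-preserving linear map. -/
def IsCPTP {n m : Type*} [Fintype n] [DecidableEq n] [Fintype m] [DecidableEq m]
    (Φ : Matrix n n ℂ →ₗ[ℂ] Matrix m m ℂ) : Prop :=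
  (∀ k : ℕ, ∀ X : Matrix (Fin k × n) (Fin k × n) ℂ, X.PosSemidef →
      (Matrix.of fun p q : Fin k × m =>
        Φ (Matrix.of fun i j => X (p.1, i) (q.1, j)) p.2 q.2).PosSemidef) ∧
  (∀ X, (Φ X).trace = X.trace)

/-- Contraction coefficient of a channel for the hockey-stick divergence. -/
noncomputable def contractionCoeff {n : Type*} [Fintype n] [DecidableEq n]
    (γ : ℝ) (Φ : Matrix n n ℂ →ₗ[ℂ] Matrix n n ℂ) : ℝ :=
  sSup {x : ℝ | ∃ ρ σ : Matrix n n ℂ, IsDensity ρ ∧ IsDensity σ ∧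
    0 < hsDiv γ ρ σ ∧ x = hsDiv γ (Φ ρ) (Φ σ) / hsDiv γ ρ σ}

/-!
On Hermitian matrices, `A ↦ Tr[A₊]` is the support function of the effects `0 ≤ P ≤ 1`:
`Tr[A₊] = max_P Re Tr[P A]`, the maximum being attained at the projection onto the positive
eigenspaces. So it is subadditive and positively homogeneous, and `Tr[(c ρ)₊] = max c 0` for a
density operator `ρ`. Splitting
`ρ - γ₁γ₂ σ = Σ_x (p(x) (ρ_x - γ₁ σ_x) + γ₁ (p(x) - γ₂ q(x)) σ_x)`
and applying subadditivity termwise gives the bound.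
-/

namespace Matrix

variable {n : Type*}

lemma IsHermitian.real_smul {A : Matrix n n ℂ} (hA : A.IsHermitian) (c : ℝ) :
    ((c : ℂ) • A).IsHermitian :=
  hA.smul (Complex.conj_ofReal c)

lemma PosSemidef.re_diag_nonneg {M : Matrix n n ℂ} (hM : M.PosSemidef) (i : n) :
    0 ≤ (M i i).re :=
  (Complex.nonneg_iff.mp hM.diag_nonneg).1

def IsEffect [DecidableEq n] (P : Matrix n n ℂ) : Prop :=
  P.PosSemidef ∧ (1 - P).PosSemidef

lemma IsEffect.re_diag_le_one [DecidableEq n] {P : Matrix n n ℂ} (hP : P.IsEffect) (i : n) :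
    (P i i).re ≤ 1 := by
  simpa using hP.2.re_diag_nonneg i

variable [Fintype n]

lemma re_trace_mul_real_smul (P A : Matrix n n ℂ) (c : ℝ) :
    (P * ((c : ℂ) • A)).trace.re = c * (P * A).trace.re := by
  rw [Matrix.mul_smul, trace_smul, smul_eq_mul, Complex.re_ofReal_mul]

variable [DecidableEq n]

lemma IsHermitian.trace_mul_eq_sum_eigenvalues {A : Matrix n n ℂ} (hA : A.IsHermitian)
    (P : Matrix n n ℂ) :
    (P * A).trace = ∑ i, (hA.eigenvalues i : ℂ) *
      (star (hA.eigenvectorUnitary : Matrix n n ℂ) * P * hA.eigenvectorUnitary) i i := by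
  set U : Matrix n n ℂ := (hA.eigenvectorUnitary : Matrix n n ℂ)
  conv_lhs => rw [hA.spectral_theorem, Unitary.conjStarAlgAut_apply]
  rw [show P * (U * diagonal (RCLike.ofReal ∘ hA.eigenvalues) * star U)
      = (P * U) * diagonal (RCLike.ofReal ∘ hA.eigenvalues) * star U by simp only [mul_assoc],
    trace_mul_cycle, trace]
  simp only [← mul_assoc, diag_apply, mul_diagonal, Function.comp_apply]
  exact Finset.sum_congr rfl fun i _ => mul_comm _ _

lemma PosSemidef.star_mul_mul_unitary {M : Matrix n n ℂ} (hM : M.PosSemidef)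
    (U : unitaryGroup n ℂ) : (star (U : Matrix n n ℂ) * M * U).PosSemidef := by
  simpa [star_eq_conjTranspose] using hM.conjTranspose_mul_mul_same (U : Matrix n n ℂ)

lemma IsEffect.star_mul_mul_unitary {P : Matrix n n ℂ} (hP : P.IsEffect)
    (U : unitaryGroup n ℂ) : (star (U : Matrix n n ℂ) * P * U).IsEffect := by
  refine ⟨hP.1.star_mul_mul_unitary U, ?_⟩
  have hUU : star (U : Matrix n n ℂ) * U = 1 := UnitaryGroup.star_mul_self U
  simpa [mul_sub, sub_mul, hUU] using hP.2.star_mul_mul_unitary U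

lemma PosSemidef.re_trace_mul_nonneg {P A : Matrix n n ℂ} (hP : P.PosSemidef)
    (hA : A.PosSemidef) : 0 ≤ (P * A).trace.re := by
  rw [hA.1.trace_mul_eq_sum_eigenvalues, Complex.re_sum]
  refine Finset.sum_nonneg fun i _ => ?_
  rw [Complex.re_ofReal_mul]
  exact mul_nonneg (hA.eigenvalues_nonneg i)
    ((hP.star_mul_mul_unitary hA.1.eigenvectorUnitary).re_diag_nonneg i)

end Matrix

open Matrix

variable {n : Type*} [Fintype n] [DecidableEq n]

lemma posPartTrace_of_isHermitian {A : Matrix n n ℂ} (hA : A.IsHermitian) :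
    posPartTrace A = ∑ i, max (hA.eigenvalues i) 0 :=
  dif_pos hA

lemma re_trace_mul_le_posPartTrace {A P : Matrix n n ℂ} (hA : A.IsHermitian)
    (hP : P.IsEffect) : (P * A).trace.re ≤ posPartTrace A := by
  rw [hA.trace_mul_eq_sum_eigenvalues, Complex.re_sum, posPartTrace_of_isHermitian hA]
  refine Finset.sum_le_sum fun i _ => ?_
  have hQ := hP.star_mul_mul_unitary hA.eigenvectorUnitary
  rw [Complex.re_ofReal_mul]
  rcases le_total 0 (hA.eigenvalues i) with h | h
  · exact (mul_le_of_le_one_right h (hQ.re_diag_le_one i)).trans (le_max_left _ _)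
  · exact (mul_nonpos_of_nonpos_of_nonneg h (hQ.1.re_diag_nonneg i)).trans (le_max_right _ _)

lemma exists_isEffect_re_trace_mul_eq_posPartTrace {A : Matrix n n ℂ} (hA : A.IsHermitian) :
    ∃ P : Matrix n n ℂ, P.IsEffect ∧ (P * A).trace.re = posPartTrace A := by
  set U : Matrix n n ℂ := (hA.eigenvectorUnitary : Matrix n n ℂ)
  have hUU : star U * U = 1 := UnitaryGroup.star_mul_self hA.eigenvectorUnitary
  let d : n → ℂ := fun i => if 0 < hA.eigenvalues i then 1 else 0
  have hd : (diagonal d).IsEffect := by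
    rw [IsEffect, ← diagonal_one, diagonal_sub, posSemidef_diagonal_iff, posSemidef_diagonal_iff]
    refine ⟨fun i => ?_, fun i => ?_⟩ <;> by_cases h : 0 < hA.eigenvalues i <;> simp [d, h]
  refine ⟨U * diagonal d * star U, ?_, ?_⟩
  · simpa using hd.star_mul_mul_unitary (star hA.eigenvectorUnitary)
  · have hconj : star U * (U * diagonal d * star U) * U = diagonal d := by
      simp only [← mul_assoc, hUU, one_mul]; simp only [mul_assoc, hUU, mul_one]
    rw [hA.trace_mul_eq_sum_eigenvalues, hconj, Complex.re_sum, posPartTrace_of_isHermitian hA]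
    refine Finset.sum_congr rfl fun i _ => ?_
    by_cases h : 0 < hA.eigenvalues i
    · simp [d, h, h.le]
    · simp [d, h, le_of_not_gt h]

lemma posPartTrace_eq_re_trace {A : Matrix n n ℂ} (hA : A.PosSemidef) :
    posPartTrace A = A.trace.re := by
  rw [posPartTrace_of_isHermitian hA.1, hA.1.trace_eq_sum_eigenvalues, Complex.re_sum]
  exact Finset.sum_congr rfl fun i _ => by simp [hA.eigenvalues_nonneg i]

lemma posPartTrace_nonneg (A : Matrix n n ℂ) : 0 ≤ posPartTrace A := by
  unfold posPartTrace
  split_ifs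
  exacts [Finset.sum_nonneg fun i _ => le_max_right _ _, le_rfl]

lemma posPartTrace_zero : posPartTrace (0 : Matrix n n ℂ) = 0 := by
  simp [posPartTrace_eq_re_trace PosSemidef.zero]

lemma posPartTrace_add_le {A B : Matrix n n ℂ} (hA : A.IsHermitian) (hB : B.IsHermitian) :
    posPartTrace (A + B) ≤ posPartTrace A + posPartTrace B := by
  obtain ⟨P, hP, hPAB⟩ := exists_isEffect_re_trace_mul_eq_posPartTrace (hA.add hB)
  rw [← hPAB, mul_add, trace_add, Complex.add_re]
  exact add_le_add (re_trace_mul_le_posPartTrace hA hP) (re_trace_mul_le_posPartTrace hB hP)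

lemma posPartTrace_sum_le {ι : Type*} (s : Finset ι) {A : ι → Matrix n n ℂ}
    (hA : ∀ i ∈ s, (A i).IsHermitian) :
    posPartTrace (∑ i ∈ s, A i) ≤ ∑ i ∈ s, posPartTrace (A i) :=
  Finset.le_sum_of_subadditive_on_pred posPartTrace IsHermitian posPartTrace_zero.le
    (fun _ _ => posPartTrace_add_le) (fun _ _ => IsHermitian.add) A hA

lemma posPartTrace_real_smul {A : Matrix n n ℂ} (hA : A.IsHermitian) {c : ℝ} (hc : 0 ≤ c) :
    posPartTrace ((c : ℂ) • A) = c * posPartTrace A := by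
  apply le_antisymm
  · obtain ⟨P, hP, hPA⟩ := exists_isEffect_re_trace_mul_eq_posPartTrace (hA.real_smul c)
    rw [← hPA, re_trace_mul_real_smul]
    exact mul_le_mul_of_nonneg_left (re_trace_mul_le_posPartTrace hA hP) hc
  · obtain ⟨P, hP, hPA⟩ := exists_isEffect_re_trace_mul_eq_posPartTrace hA
    rw [← hPA, ← re_trace_mul_real_smul]
    exact re_trace_mul_le_posPartTrace (hA.real_smul c) hP

lemma posPartTrace_real_smul_of_posSemidef {A : Matrix n n ℂ} (hA : A.PosSemidef) (c : ℝ) :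
    posPartTrace ((c : ℂ) • A) = max c 0 * A.trace.re := by
  rcases le_total 0 c with hc | hc
  · rw [posPartTrace_real_smul hA.1 hc, posPartTrace_eq_re_trace hA, max_eq_left hc]
  · rw [max_eq_right hc, zero_mul]
    refine le_antisymm ?_ (posPartTrace_nonneg _)
    obtain ⟨P, hP, hPA⟩ := exists_isEffect_re_trace_mul_eq_posPartTrace (hA.1.real_smul c)
    rw [← hPA, re_trace_mul_real_smul]
    exact mul_nonpos_of_nonpos_of_nonneg hc (hP.1.re_trace_mul_nonneg hA)

theorem hsDiv_strong_convexity_general {d m : ℕ}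
    (γ₁ γ₂ : ℝ) (hγ₁ : 1 ≤ γ₁)
    (p q : Fin m → ℝ) (hp0 : ∀ x, 0 ≤ p x)
    (ρ σ : Fin m → Matrix (Fin d) (Fin d) ℂ)
    (hρ : ∀ x, IsDensity (ρ x)) (hσ : ∀ x, IsDensity (σ x)) :
    hsDiv (γ₁ * γ₂) (∑ x, (p x : ℂ) • ρ x) (∑ x, (q x : ℂ) • σ x) ≤
      ∑ x, p x * hsDiv γ₁ (ρ x) (σ x) + γ₁ * ∑ x, max (p x - γ₂ * q x) 0 := by
  set A : Fin m → Matrix (Fin d) (Fin d) ℂ := fun x => ρ x - (γ₁ : ℂ) • σ x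
  set c : Fin m → ℝ := fun x => γ₁ * (p x - γ₂ * q x)
  have hA : ∀ x, (A x).IsHermitian := fun x => (hρ x).1.1.sub ((hσ x).1.1.real_smul γ₁)
  have hσH : ∀ x, (σ x).IsHermitian := fun x => (hσ x).1.1
  have hdecomp : (∑ x, (p x : ℂ) • ρ x) - ((γ₁ * γ₂ : ℝ) : ℂ) • ∑ x, (q x : ℂ) • σ x =
      ∑ x, ((p x : ℂ) • A x + (c x : ℂ) • σ x) := by
    rw [Finset.smul_sum, ← Finset.sum_sub_distrib]
    refine Finset.sum_congr rfl fun x _ => ?_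
    push_cast [A, c]
    match_scalars <;> ring
  calc hsDiv (γ₁ * γ₂) (∑ x, (p x : ℂ) • ρ x) (∑ x, (q x : ℂ) • σ x)
      ≤ ∑ x, posPartTrace ((p x : ℂ) • A x + (c x : ℂ) • σ x) := by
        rw [hsDiv, hdecomp]
        exact posPartTrace_sum_le _ fun x _ => ((hA x).real_smul _).add ((hσH x).real_smul _)
    _ ≤ ∑ x, (posPartTrace ((p x : ℂ) • A x) + posPartTrace ((c x : ℂ) • σ x)) :=
        Finset.sum_le_sum fun x _ =>
          posPartTrace_add_le ((hA x).real_smul _) ((hσH x).real_smul _)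
    _ = ∑ x, p x * hsDiv γ₁ (ρ x) (σ x) + γ₁ * ∑ x, max (p x - γ₂ * q x) 0 := by
        rw [Finset.mul_sum, ← Finset.sum_add_distrib]
        refine Finset.sum_congr rfl fun x _ => ?_
        rw [posPartTrace_real_smul (hA x) (hp0 x), posPartTrace_real_smul_of_posSemidef (hσ x).1,
          (hσ x).2, Complex.one_re, mul_one, mul_max_of_nonneg _ _ (by linarith), mul_zero]
        rfl

/-- Strong convexity of the hockey-stick divergence, with the classical
hockey-stick divergence `E_γ(p‖q) = Σ_x max (p x - γ q x) 0` of the mixing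
distributions appearing on the right-hand side. -/
theorem hsDiv_strong_convexity {d m : ℕ}
    (γ₁ γ₂ : ℝ) (hγ₁ : 1 ≤ γ₁) (hγ₂ : 1 ≤ γ₂)
    (p q : Fin m → ℝ) (hp0 : ∀ x, 0 ≤ p x) (hp1 : ∑ x, p x = 1)
    (hq0 : ∀ x, 0 ≤ q x) (hq1 : ∑ x, q x = 1)
    (ρ σ : Fin m → Matrix (Fin d) (Fin d) ℂ)
    (hρ : ∀ x, IsDensity (ρ x)) (hσ : ∀ x, IsDensity (σ x)) :
    hsDiv (γ₁ * γ₂) (∑ x, (p x : ℂ) • ρ x) (∑ x, (q x : ℂ) • σ x) ≤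
      ∑ x, p x * hsDiv γ₁ (ρ x) (σ x) + γ₁ * ∑ x, max (p x - γ₂ * q x) 0 :=
  hsDiv_strong_convexity_general γ₁ γ₂ hγ₁ p q hp0 ρ σ hρ hσ
end

section
/- Hockey-stick divergence under global depolarizing noise: let D_p be the depolarizing channel on a D-dimensional system with parameter 0 ≤ p ≤ 1, D_p(ρ) = (1−p)ρ + p·Tr(ρ)·I/D. Then for all density operators ρ, σ and γ ≥ 1, E_γ(D_p(ρ)‖D_p(σ)) ≤ max{0, (1−γ)·p/D + (1−p)·E_γ(ρ‖σ)}. Moreover, if D ≥ 2, the contraction coefficient satisfies η_γ(D_p) = max{0, (1−γ)·p/D + (1−p)}. -/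
open scoped BigOperators ComplexOrder

/-- The depolarizing channel `D_p(ρ) = (1-p)ρ + p Tr(ρ) I/D` on a `D`-dimensional system. -/
noncomputable def depol (D : ℕ) (p : ℝ) :
    Matrix (Fin D) (Fin D) ℂ →ₗ[ℂ] Matrix (Fin D) (Fin D) ℂ where
  toFun ρ := (1 - (p : ℂ)) • ρ + (((p : ℂ) / D) * ρ.trace) • (1 : Matrix (Fin D) (Fin D) ℂ)
  map_add' X Y := by
    simp [Matrix.trace_add, mul_add, add_smul]
    abel
  map_smul' c X := by
    simp [Matrix.trace_smul, smul_smul, smul_add]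
    ring_nf

/-! Both states have unit trace, so `D_p(ρ) - γ D_p(σ) = (1 - p)(ρ - γσ) + ((1 - γ)p/D) I`: its
eigenvalues are those of `ρ - γσ` under the affine map `x ↦ (1 - p)x + (1 - γ)p/D`, whose offset is
nonpositive. Adding a nonpositive constant to nonnegative numbers `yᵢ` gives
`∑ (yᵢ + c)₊ ≤ (c + ∑ yᵢ)₊`, which is the first claim. For the contraction coefficient, the
eigenvalues of `ρ - γσ` are dominated by the diagonal of `ρ` in the eigenbasis, so
`E_γ(ρ‖σ) ≤ Tr ρ = 1`, and a nonpositive offset only shrinks when divided by a number in `(0, 1]`;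
two orthogonal pure states attain the bound. -/

open Polynomial Matrix Finset

theorem Finset.sum_max_add_le {ι : Type*} (s : Finset ι) {y : ι → ℝ} (hy : ∀ i ∈ s, 0 ≤ y i)
    {c : ℝ} (hc : c ≤ 0) : ∑ i ∈ s, max (y i + c) 0 ≤ max 0 (c + ∑ i ∈ s, y i) := by
  induction s using Finset.cons_induction with
  | empty => simp
  | cons j s hj ih =>
    have hs : 0 ≤ ∑ i ∈ s, y i := sum_nonneg fun i hi => hy i (mem_cons_of_mem hi)
    have ih := ih fun i hi => hy i (mem_cons_of_mem hi)
    have hyj := hy j (mem_cons_self j s)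
    rw [sum_cons, sum_cons]
    rcases le_total (y j + c) 0 with h | h
    · rw [max_eq_right h, zero_add]
      exact ih.trans (max_le_max_left 0 (by linarith))
    · rw [max_eq_left h]
      refine le_max_of_le_right ?_
      rcases le_total (c + ∑ i ∈ s, y i) 0 with h' | h'
      · rw [max_eq_left h'] at ih; linarith
      · rw [max_eq_right h'] at ih; linarith

theorem max_zero_add_mul_le {a c E : ℝ} (hc : c ≤ 0) (hE0 : 0 ≤ E) (hE1 : E ≤ 1) :
    max 0 (c + a * E) ≤ max 0 (c + a) * E := by
  refine max_le (by positivity) ?_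
  calc c + a * E ≤ (c + a) * E := by nlinarith
    _ ≤ max 0 (c + a) * E := by gcongr; exact le_max_right _ _

theorem isHermitian_sub_smul {n : Type*} {ρ σ : Matrix n n ℂ} (hρ : ρ.IsHermitian)
    (hσ : σ.IsHermitian) (γ : ℝ) : (ρ - (γ : ℂ) • σ).IsHermitian :=
  hρ.sub (hσ.smul (Complex.conj_ofReal γ))

theorem diagonal_single_sub_smul_diagonal_single {n : Type*} [DecidableEq n] (i j : n) (γ : ℝ) :
    diagonal (Pi.single i 1 : n → ℂ) - (γ : ℂ) • diagonal (Pi.single j 1) =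
      diagonal fun k => ((Pi.single i 1 - γ • Pi.single j 1 : n → ℝ) k : ℂ) := by
  rw [← diagonal_smul, diagonal_sub]
  congr 1
  ext k
  rcases eq_or_ne k i with rfl | hi <;> rcases eq_or_ne k j with rfl | hj <;> simp [*]

section
variable {n : Type*} [Fintype n] [DecidableEq n]

theorem Matrix.IsHermitian.sum_comp_eigenvalues_of_charpoly_eq {A : Matrix n n ℂ}
    (hA : A.IsHermitian) {d : n → ℝ} (h : A.charpoly = ∏ i, (X - C (d i : ℂ))) (f : ℝ → ℝ) :
    ∑ i, f (hA.eigenvalues i) = ∑ i, f (d i) := by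
  have hroots := hA.roots_charpoly_eq_eigenvalues
  rw [h, roots_prod _ _ (by simp [prod_ne_zero_iff, X_sub_C_ne_zero])] at hroots
  simp only [roots_X_sub_C, Multiset.bind_singleton] at hroots
  have hmap : univ.val.map hA.eigenvalues = univ.val.map d :=
    Multiset.map_injective Complex.ofReal_injective (by simpa [Multiset.map_map] using hroots.symm)
  calc ∑ i, f (hA.eigenvalues i) = ((univ.val.map hA.eigenvalues).map f).sum := by
        rw [Multiset.map_map, sum_map_val]; rfl
    _ = ∑ i, f (d i) := by rw [hmap, Multiset.map_map, sum_map_val]; rfl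

theorem posPartTrace_eq_of_charpoly_eq {A : Matrix n n ℂ} (hA : A.IsHermitian) {d : n → ℝ}
    (h : A.charpoly = ∏ i, (X - C (d i : ℂ))) : posPartTrace A = ∑ i, max (d i) 0 := by
  rw [posPartTrace, dif_pos hA]
  exact hA.sum_comp_eigenvalues_of_charpoly_eq h (max · 0)

theorem posPartTrace_diagonal (d : n → ℝ) :
    posPartTrace (diagonal fun i => (d i : ℂ)) = ∑ i, max (d i) 0 :=
  posPartTrace_eq_of_charpoly_eq (isHermitian_diagonal_of_self_adjoint _ (by ext; simp))
    (charpoly_diagonal _)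

theorem posPartTrace_smul_diagonal_add_smul_one (a c : ℝ) (d : n → ℝ) :
    posPartTrace ((a : ℂ) • diagonal (fun i => (d i : ℂ)) + (c : ℂ) • 1) =
      ∑ i, max (a * d i + c) 0 := by
  rw [← posPartTrace_diagonal]
  congr 1
  ext i j
  rcases eq_or_ne i j with rfl | h <;> simp [*]

theorem Matrix.IsHermitian.cfc_mul_add {A : Matrix n n ℂ} (hA : A.IsHermitian) (a c : ℝ) :
    cfc (fun x => a * x + c) A = (a : ℂ) • A + (c : ℂ) • 1 := by
  have hA' : IsSelfAdjoint A := hA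
  rw [cfc_add_const c (fun x => a * x) A, cfc_const_mul_id a A, Algebra.algebraMap_eq_smul_one]
  simp [Complex.coe_smul]

theorem posPartTrace_smul_add_smul_one {A : Matrix n n ℂ} (hA : A.IsHermitian) (a c : ℝ) :
    posPartTrace ((a : ℂ) • A + (c : ℂ) • 1) = ∑ i, max (a * hA.eigenvalues i + c) 0 := by
  rw [← hA.cfc_mul_add]
  exact posPartTrace_eq_of_charpoly_eq (cfc_predicate _ A) (hA.charpoly_cfc_eq _)

theorem posPartTrace_smul_add_smul_one_le {A : Matrix n n ℂ} (hA : A.IsHermitian) {a c : ℝ}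
    (ha : 0 ≤ a) (hc : c ≤ 0) :
    posPartTrace ((a : ℂ) • A + (c : ℂ) • 1) ≤ max 0 (c + a * posPartTrace A) := by
  rw [posPartTrace_smul_add_smul_one hA, posPartTrace, dif_pos hA, mul_sum]
  calc ∑ i, max (a * hA.eigenvalues i + c) 0
      ≤ ∑ i, max (a * max (hA.eigenvalues i) 0 + c) 0 := by gcongr; exact le_max_left _ _
    _ ≤ _ := sum_max_add_le _ (fun i _ => by positivity) hc

theorem posPartTrace_le_re_trace {X ρ : Matrix n n ℂ} (hX : X.IsHermitian) (hρ : ρ.PosSemidef)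
    (hXρ : (ρ - X).PosSemidef) : posPartTrace X ≤ ρ.trace.re := by
  set U : Matrix n n ℂ := (hX.eigenvectorUnitary : Matrix n n ℂ)
  have hdiag : Uᴴ * X * U = diagonal (RCLike.ofReal ∘ hX.eigenvalues) := by
    rw [← hX.conjStarAlgAut_star_eigenvectorUnitary, Unitary.conjStarAlgAut_star_apply]; rfl
  have hgap : (Uᴴ * ρ * U - diagonal (RCLike.ofReal ∘ hX.eigenvalues)).PosSemidef := by
    rw [← hdiag, ← Matrix.sub_mul, ← Matrix.mul_sub]
    exact hXρ.conjTranspose_mul_mul_same U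
  have htrace : (Uᴴ * ρ * U).trace = ρ.trace := by
    rw [trace_mul_cycle, ← star_eq_conjTranspose,
      mem_unitaryGroup_iff.mp hX.eigenvectorUnitary.2, one_mul]
  rw [posPartTrace, dif_pos hX, ← htrace, trace, Complex.re_sum]
  refine sum_le_sum fun i _ => max_le ?_ ?_
  · simpa using (Complex.le_def.mp hgap.diag_nonneg).1
  · exact (Complex.le_def.mp (hρ.conjTranspose_mul_mul_same U).diag_nonneg).1

theorem hsDiv_le_one {ρ σ : Matrix n n ℂ} (hρ : IsDensity ρ) (hσ : IsDensity σ) {γ : ℝ}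
    (hγ : 0 ≤ γ) : hsDiv γ ρ σ ≤ 1 := by
  have h := posPartTrace_le_re_trace (isHermitian_sub_smul hρ.1.1 hσ.1.1 γ) hρ.1
    (by simpa using hσ.1.smul hγ)
  rwa [hρ.2, Complex.one_re] at h

theorem isDensity_diagonal_single (i : n) : IsDensity (diagonal (Pi.single i 1 : n → ℂ)) :=
  ⟨posSemidef_diagonal_iff.mpr fun j => by rcases eq_or_ne j i with rfl | h <;> simp [*],
    by simp [trace_diagonal]⟩

theorem sum_max_single_sub_smul_single {i j : n} (hij : i ≠ j) {a c γ : ℝ} (ha : 0 ≤ a)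
    (hc : c ≤ 0) (hγ : 0 ≤ γ) :
    ∑ k, max (a * (Pi.single i 1 - γ • Pi.single j 1 : n → ℝ) k + c) 0 = max 0 (c + a) := by
  rw [sum_eq_single i]
  · simp [hij, max_comm, add_comm]
  · intro k _ hk
    rcases eq_or_ne k j with rfl | hkj
    · simpa [hk] using hc.trans (mul_nonneg ha hγ)
    · simp [hk, hkj, hc]
  · simp

theorem hsDiv_diagonal_single {i j : n} (hij : i ≠ j) {γ : ℝ} (hγ : 0 ≤ γ) :
    hsDiv γ (diagonal (Pi.single i 1)) (diagonal (Pi.single j 1)) = 1 := by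
  rw [hsDiv, diagonal_single_sub_smul_diagonal_single, posPartTrace_diagonal]
  simpa using sum_max_single_sub_smul_single hij zero_le_one le_rfl hγ

end

section
variable {D : ℕ} {p γ : ℝ}

theorem one_sub_mul_div_natCast_nonpos (hp0 : 0 ≤ p) (hγ : 1 ≤ γ) : (1 - γ) * p / D ≤ 0 :=
  div_nonpos_of_nonpos_of_nonneg (mul_nonpos_of_nonpos_of_nonneg (by linarith) hp0) D.cast_nonneg

theorem depol_sub_smul_depol {ρ σ : Matrix (Fin D) (Fin D) ℂ} (hρ : ρ.trace = 1)
    (hσ : σ.trace = 1) :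
    depol D p ρ - (γ : ℂ) • depol D p σ =
      ((1 - p : ℝ) : ℂ) • (ρ - (γ : ℂ) • σ) + (((1 - γ) * p / D : ℝ) : ℂ) • 1 := by
  change (1 - (p : ℂ)) • ρ + ((p / D : ℂ) * ρ.trace) • 1 -
      (γ : ℂ) • ((1 - (p : ℂ)) • σ + ((p / D : ℂ) * σ.trace) • 1) = _
  rw [hρ, hσ]
  push_cast
  module

theorem hsDiv_depol_le (hp0 : 0 ≤ p) (hp1 : p ≤ 1) (hγ : 1 ≤ γ)
    {ρ σ : Matrix (Fin D) (Fin D) ℂ} (hρ : IsDensity ρ) (hσ : IsDensity σ) :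
    hsDiv γ (depol D p ρ) (depol D p σ) ≤ max 0 ((1 - γ) * p / D + (1 - p) * hsDiv γ ρ σ) := by
  rw [hsDiv, depol_sub_smul_depol hρ.2 hσ.2]
  exact posPartTrace_smul_add_smul_one_le (isHermitian_sub_smul hρ.1.1 hσ.1.1 γ)
    (by linarith) (one_sub_mul_div_natCast_nonpos hp0 hγ)

theorem hsDiv_depol_diagonal_single {i j : Fin D} (hij : i ≠ j) (hp0 : 0 ≤ p) (hp1 : p ≤ 1)
    (hγ : 1 ≤ γ) :
    hsDiv γ (depol D p (diagonal (Pi.single i 1))) (depol D p (diagonal (Pi.single j 1))) =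
      max 0 ((1 - γ) * p / D + (1 - p)) := by
  rw [hsDiv, depol_sub_smul_depol (isDensity_diagonal_single i).2 (isDensity_diagonal_single j).2,
    diagonal_single_sub_smul_diagonal_single, posPartTrace_smul_diagonal_add_smul_one]
  exact sum_max_single_sub_smul_single hij (by linarith) (one_sub_mul_div_natCast_nonpos hp0 hγ)
    (by linarith)

end

/-- Hockey-stick divergence under global depolarizing noise, and the exact value of the
contraction coefficient of the depolarizing channel. -/
theorem hsDiv_depol (D : ℕ) (p γ : ℝ) (hp0 : 0 ≤ p) (hp1 : p ≤ 1) (hγ : 1 ≤ γ) :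
    (∀ ρ σ : Matrix (Fin D) (Fin D) ℂ, IsDensity ρ → IsDensity σ →
      hsDiv γ (depol D p ρ) (depol D p σ) ≤
        max 0 ((1 - γ) * p / D + (1 - p) * hsDiv γ ρ σ)) ∧
    (2 ≤ D → contractionCoeff γ (depol D p) = max 0 ((1 - γ) * p / D + (1 - p))) := by
  refine ⟨fun ρ σ hρ hσ => hsDiv_depol_le hp0 hp1 hγ hρ hσ, fun hD => IsGreatest.csSup_eq ⟨?_, ?_⟩⟩
  · have : Nontrivial (Fin D) := Fin.nontrivial_iff_two_le.mpr hD
    obtain ⟨i, j, hij⟩ := exists_pair_ne (Fin D)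
    refine ⟨_, _, isDensity_diagonal_single i, isDensity_diagonal_single j, ?_, ?_⟩
    · rw [hsDiv_diagonal_single hij (by linarith)]; exact one_pos
    · rw [hsDiv_diagonal_single hij (by linarith), hsDiv_depol_diagonal_single hij hp0 hp1 hγ,
        div_one]
  · rintro x ⟨ρ, σ, hρ, hσ, hpos, rfl⟩
    rw [div_le_iff₀ hpos]
    exact (hsDiv_depol_le hp0 hp1 hγ hρ hσ).trans <| max_zero_add_mul_le
      (one_sub_mul_div_natCast_nonpos hp0 hγ) hpos.le (hsDiv_le_one hρ hσ (by linarith))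
end
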